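/- Let λ > 0 and s > 0, and let X, Y be i.i.d. random variables each having the exponential distribution with rate λ. Set U := max(X,Y) and V := min(X,Y). Then 1 − e^{−λs/2} ≤ P(V² + s·V + (s/2)·U > U²) ≤ 1 − e^{−λs}. -/

import Mathlib

/-!
Put `d := U - V = |X - Y|`. Then `V² + sV + (s/2)U - U² = (3s/2 - 2d)V + d(s/2 - d)`, so on the
almost sure event `V > 0` the event in question contains `{d ≤ s/2}` and is contained in `{d < s}`.
For i.i.d. exponentials, `|X - Y|` is again exponential with rate `λ`: by memorylessness
`P(X > Y + c) = E[e^{-λ(Y + c)}] = e^{-λc}/2`, and symmetrically for `Y > X + c`.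
-/

open MeasureTheory ProbabilityTheory Real Set

namespace ProbabilityTheory

variable {l : ℝ}

lemma expMeasure_Iic_of_nonneg (hl : 0 < l) {x : ℝ} (hx : 0 ≤ x) :
    expMeasure l (Iic x) = ENNReal.ofReal (1 - exp (-(l * x))) := by
  change volume.withDensity (exponentialPDF l) (Iic x) = _
  rw [withDensity_apply _ measurableSet_Iic, lintegral_exponentialPDF_eq_antiDeriv hl, if_pos hx]

lemma expMeasure_Ioi_of_nonneg (hl : 0 < l) {x : ℝ} (hx : 0 ≤ x) :
    expMeasure l (Ioi x) = ENNReal.ofReal (exp (-(l * x))) := by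
  have := isProbabilityMeasure_expMeasure hl
  have hexp : exp (-(l * x)) ≤ 1 := exp_le_one_iff.mpr (by nlinarith)
  rw [← compl_Iic, prob_compl_eq_one_sub measurableSet_Iic, expMeasure_Iic_of_nonneg hl hx,
    ← ENNReal.ofReal_one, ← ENNReal.ofReal_sub _ (sub_nonneg.mpr hexp), sub_sub_cancel]

lemma ae_pos_expMeasure (hl : 0 < l) : ∀ᵐ x ∂expMeasure l, 0 < x := by
  rw [ae_iff]
  simp only [not_lt]
  change expMeasure l (Iic 0) = 0
  rw [expMeasure_Iic_of_nonneg hl le_rfl, mul_zero, neg_zero, exp_zero, sub_self,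
    ENNReal.ofReal_zero]

lemma lintegral_exp_neg_mul_expMeasure (hl : 0 < l) {a : ℝ} (ha : 0 < l + a) :
    ∫⁻ y, ENNReal.ofReal (exp (-(a * y))) ∂expMeasure l = ENNReal.ofReal (l / (l + a)) := by
  have hpdf : ∀ y, exponentialPDF l y * ENNReal.ofReal (exp (-(a * y)))
      = ENNReal.ofReal (l / (l + a)) * exponentialPDF (l + a) y := by
    intro y
    rcases le_or_gt 0 y with hy | hy
    · rw [exponentialPDF_of_nonneg hy, exponentialPDF_of_nonneg hy,
        ← ENNReal.ofReal_mul (by positivity), ← ENNReal.ofReal_mul (by positivity)]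
      congr 1
      field_simp
      rw [← exp_add]
      ring_nf
    · rw [exponentialPDF_of_neg hy, exponentialPDF_of_neg hy, zero_mul, mul_zero]
  change ∫⁻ y, _ ∂volume.withDensity (exponentialPDF l) = _
  rw [lintegral_withDensity_eq_lintegral_mul _ (by unfold exponentialPDF; fun_prop) (by fun_prop)]
  simp_rw [Pi.mul_apply, hpdf]
  rw [lintegral_const_mul _ (by unfold exponentialPDF; fun_prop),
    lintegral_exponentialPDF_eq_one ha, mul_one]

lemma expMeasure_prod_add_lt (hl : 0 < l) {c : ℝ} (hc : 0 ≤ c) :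
    (expMeasure l).prod (expMeasure l) {p : ℝ × ℝ | p.2 + c < p.1}
      = ENNReal.ofReal (exp (-(l * c)) / 2) := by
  have := isProbabilityMeasure_expMeasure hl
  rw [Measure.prod_apply_symm (measurableSet_lt (by fun_prop) measurable_fst)]
  have hsection : ∀ᵐ y ∂expMeasure l,
      expMeasure l ((fun x => (x, y)) ⁻¹' {p : ℝ × ℝ | p.2 + c < p.1})
        = ENNReal.ofReal (exp (-(l * c))) * ENNReal.ofReal (exp (-(l * y))) := by
    filter_upwards [ae_pos_expMeasure hl] with y hy
    rw [show (fun x => (x, y)) ⁻¹' {p : ℝ × ℝ | p.2 + c < p.1} = Ioi (y + c) from rfl,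
      expMeasure_Ioi_of_nonneg hl (by linarith), ← ENNReal.ofReal_mul (exp_pos _).le,
      ← exp_add, mul_add, neg_add, add_comm]
  rw [lintegral_congr_ae hsection, lintegral_const_mul _ (by fun_prop),
    lintegral_exp_neg_mul_expMeasure hl (by linarith), ← ENNReal.ofReal_mul (exp_pos _).le]
  congr 1
  field_simp
  ring

lemma expMeasure_prod_abs_sub_le (hl : 0 < l) {c : ℝ} (hc : 0 ≤ c) :
    (expMeasure l).prod (expMeasure l) {p : ℝ × ℝ | |p.1 - p.2| ≤ c}
      = ENNReal.ofReal (1 - exp (-(l * c))) := by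
  have := isProbabilityMeasure_expMeasure hl
  set μ := (expMeasure l).prod (expMeasure l)
  have hmeas : MeasurableSet {p : ℝ × ℝ | p.2 + c < p.1} :=
    measurableSet_lt (by fun_prop) measurable_fst
  have hswap : μ {p : ℝ × ℝ | p.1 + c < p.2} = μ {p : ℝ × ℝ | p.2 + c < p.1} := by
    change μ (Prod.swap ⁻¹' {p : ℝ × ℝ | p.2 + c < p.1}) = _
    rw [← Measure.map_apply measurable_swap hmeas, Measure.prod_swap]
  have hcompl : {p : ℝ × ℝ | |p.1 - p.2| ≤ c}
      = ({p : ℝ × ℝ | p.2 + c < p.1} ∪ {p : ℝ × ℝ | p.1 + c < p.2})ᶜ := by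
    ext p
    simp only [mem_compl_iff, mem_union, mem_ofPred_eq, not_or, not_lt, abs_sub_le_iff]
    constructor <;> rintro ⟨h1, h2⟩ <;> constructor <;> linarith
  have hdisj : Disjoint {p : ℝ × ℝ | p.2 + c < p.1} {p : ℝ × ℝ | p.1 + c < p.2} :=
    disjoint_left.mpr fun p h1 h2 => by simp only [mem_ofPred_eq] at h1 h2; linarith
  have hexp : exp (-(l * c)) ≤ 1 := exp_le_one_iff.mpr (by nlinarith)
  rw [hcompl, prob_compl_eq_one_sub (hmeas.union (measurableSet_lt (by fun_prop) measurable_snd)),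
    measure_union hdisj (measurableSet_lt (by fun_prop) measurable_snd), hswap,
    expMeasure_prod_add_lt hl hc, ← ENNReal.ofReal_add (by positivity) (by positivity),
    add_halves, ← ENNReal.ofReal_one, ← ENNReal.ofReal_sub _ (exp_pos _).le]


lemma measure_abs_sub_le_of_indepFun_expMeasure {Ω : Type*} [MeasurableSpace Ω]
    {P : Measure Ω} [IsFiniteMeasure P] {X Y : Ω → ℝ} (hX : Measurable X) (hY : Measurable Y)
    (hindep : IndepFun X Y P) (hXd : P.map X = expMeasure l) (hYd : P.map Y = expMeasure l)
    (hl : 0 < l) {c : ℝ} (hc : 0 ≤ c) :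
    P {ω | |X ω - Y ω| ≤ c} = ENNReal.ofReal (1 - exp (-(l * c))) := by
  have hlaw : P.map (fun ω => (X ω, Y ω)) = (expMeasure l).prod (expMeasure l) := by
    rw [(indepFun_iff_map_prod_eq_prod_map_map hX.aemeasurable hY.aemeasurable).mp hindep,
      hXd, hYd]
  rw [← expMeasure_prod_abs_sub_le hl hc, ← hlaw,
    Measure.map_apply (hX.prodMk hY) (measurableSet_le (by fun_prop) measurable_const)]
  rfl

end ProbabilityTheory

lemma sq_lt_of_sub_le_half {s u v : ℝ} (hs : 0 < s) (hv : 0 < v) (hvu : v ≤ u)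
    (h : u - v ≤ s / 2) : u ^ 2 < v ^ 2 + s * v + s / 2 * u := by
  nlinarith [mul_pos (by linarith : 0 < 3 * s / 2 - 2 * (u - v)) hv,
    mul_nonneg (sub_nonneg.mpr hvu) (by linarith : 0 ≤ s / 2 - (u - v))]

lemma sub_lt_of_sq_lt {s u v : ℝ} (hs : 0 < s) (hv : 0 < v) (hvu : v ≤ u)
    (h : u ^ 2 < v ^ 2 + s * v + s / 2 * u) : u - v < s := by
  by_contra! hsd
  nlinarith [mul_pos (by linarith : 0 < 2 * (u - v) - 3 * s / 2) hv,
    mul_nonneg (sub_nonneg.mpr hvu) (by linarith : 0 ≤ (u - v) - s / 2)]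

/-- If `X, Y` are i.i.d. exponential with rate `λ > 0`,
`U := max(X,Y)`, `V := min(X,Y)`, then for `s > 0`,
`1 − e^{−λs/2} ≤ P(V² + sV + (s/2)U > U²) ≤ 1 − e^{−λs}`. -/
theorem stmt_18 {Ω : Type*} [MeasurableSpace Ω] (P : Measure Ω) [IsProbabilityMeasure P]
    (l : ℝ) (hl : 0 < l) (s : ℝ) (hs : 0 < s)
    (X Y : Ω → ℝ) (hX : Measurable X) (hY : Measurable Y)
    (hindep : IndepFun X Y P)
    (hXd : P.map X = expMeasure l)
    (hYd : P.map Y = expMeasure l)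
    (U V : Ω → ℝ) (hU : U = fun ω => max (X ω) (Y ω))
    (hV : V = fun ω => min (X ω) (Y ω)) :
    ENNReal.ofReal (1 - Real.exp (-(l * s / 2)))
      ≤ P {ω | V ω ^ 2 + s * V ω + (s / 2) * U ω > U ω ^ 2} ∧
    P {ω | V ω ^ 2 + s * V ω + (s / 2) * U ω > U ω ^ 2}
      ≤ ENNReal.ofReal (1 - Real.exp (-(l * s))) := by
  subst hU hV
  have hXpos : ∀ᵐ ω ∂P, 0 < X ω := ae_of_ae_map hX.aemeasurable (hXd ▸ ae_pos_expMeasure hl)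
  have hYpos : ∀ᵐ ω ∂P, 0 < Y ω := ae_of_ae_map hY.aemeasurable (hYd ▸ ae_pos_expMeasure hl)
  have hdist := fun c (hc : 0 ≤ c) =>
    measure_abs_sub_le_of_indepFun_expMeasure hX hY hindep hXd hYd hl hc
  constructor
  · rw [show l * s / 2 = l * (s / 2) by ring, ← hdist _ (by positivity)]
    refine measure_mono_ae ?_
    filter_upwards [hXpos, hYpos] with ω hx hy hω
    refine sq_lt_of_sub_le_half hs (lt_min hx hy) min_le_max ?_
    rwa [max_sub_min_eq_abs, abs_sub_comm]
  · rw [← hdist s hs.le]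
    refine measure_mono_ae ?_
    filter_upwards [hXpos, hYpos] with ω hx hy hω
    have := sub_lt_of_sq_lt hs (lt_min hx hy) min_le_max hω
    rw [max_sub_min_eq_abs, abs_sub_comm] at this
    exact this.le
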